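/- arXiv:1311.6996 — 7 statements merged into one kernel-verified Lean document; each statement's English description precedes it below -/
import Mathlib

section
/- Let k ≥ 5 and let C be a clique of size k in G. Set A = V \ C and B = W ∪ E(C), where E(C) denotes the set of edges of G with both endpoints in C. Then (A, B) is a biclique of G′, |A| = k, |B| = k(k−1), and the edge saving satisfies |A|·|B| − |A| = k³ − k² − k. -/
open Finset

/-- Number of elements of `W`, namely `k(k−1)/2`. -/
def Wcard (k : ℕ) : ℕ := k * (k - 1) / 2

/-- Adjacency in the bipartite graph `G′` whose parts are `V₁ = V` and
`V₂ = E ∪ W` (modelled inside `Sym2 V ⊕ Fin w`): a vertex `a ∈ V₁` is adjacent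
to an edge `e ∈ E` iff `a` is not an endpoint of `e`, and `a` is adjacent to
every element of `W`. -/
def GpAdj {V : Type*} (G : SimpleGraph V) (w : ℕ) (a : V) (b : Sym2 V ⊕ Fin w) : Prop :=
  match b with
  | Sum.inl e => a ∉ e
  | Sum.inr _ => True

/-- `(A, B)` is a biclique of `G′`: `A ⊆ V₁`, `B ⊆ V₂ = E ∪ W` (so the `Sym2`
elements of `B` must be genuine edges of `G`), and every element of `A` is
adjacent in `G′` to every element of `B`. -/
def IsBiclique {V : Type*} (G : SimpleGraph V) (w : ℕ)
    (A : Finset V) (B : Finset (Sym2 V ⊕ Fin w)) : Prop :=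
  (∀ e : Sym2 V, Sum.inl e ∈ B → e ∈ G.edgeSet) ∧
    ∀ a ∈ A, ∀ b ∈ B, GpAdj G w a b

/-- The set `A = V \ C`. -/
def Apart {V : Type*} [Fintype V] [DecidableEq V] (C : Finset V) : Finset V :=
  Finset.univ \ C

/-- The set `B = W ∪ E(C)`, where `E(C)` is the set of edges of `G` with both
endpoints in `C`. -/
def Bpart {V : Type*} [Fintype V] [DecidableEq V] (G : SimpleGraph V)
    [DecidableRel G.Adj] (k : ℕ) (C : Finset V) : Finset (Sym2 V ⊕ Fin (Wcard k)) :=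
  (G.edgeFinset ∩ C.sym2).image Sum.inl ∪ Finset.univ.image Sum.inr

/-!
Every vertex of `A = V \ C` avoids every edge inside `C`, so `(A, B)` is a biclique for any `C`
whatsoever. When `C` is a `k`-clique, its edges are the `k.choose 2` pairs of distinct vertices,
and `W` has `k(k-1)/2 = k.choose 2` elements as well, so `|B| = 2 · k.choose 2 = k(k-1)`.
-/

section Biclique

variable {V : Type*} [Fintype V] [DecidableEq V]

lemma card_apart (C : Finset V) : (Apart C).card = Fintype.card V - C.card :=
  card_univ_sdiff C

variable (G : SimpleGraph V) [DecidableRel G.Adj]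

lemma isBiclique_apart_bpart (k : ℕ) (C : Finset V) :
    IsBiclique G (Wcard k) (Apart C) (Bpart G k C) := by
  constructor
  · intro e he
    simp only [Bpart, mem_union, mem_image, Sum.inl.injEq, reduceCtorEq, and_false,
      exists_false, or_false] at he
    obtain ⟨e, he, rfl⟩ := he
    exact SimpleGraph.mem_edgeFinset.1 (mem_inter.1 he).1
  · intro a ha b hb
    obtain ⟨e, he, rfl⟩ | ⟨_, _, rfl⟩ := by simpa only [Bpart, mem_union, mem_image] using hb
    · exact fun hae => (mem_sdiff.1 ha).2 (mem_sym2_iff.1 (mem_inter.1 he).2 a hae)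
    · trivial

lemma card_bpart (k : ℕ) (C : Finset V) :
    (Bpart G k C).card = (G.edgeFinset ∩ C.sym2).card + Wcard k := by
  rw [Bpart, card_union_of_disjoint (by simp [disjoint_left]),
    card_image_of_injective _ Sum.inl_injective, card_image_of_injective _ Sum.inr_injective,
    card_univ, Fintype.card_fin]

lemma SimpleGraph.IsClique.edgeFinset_inter_sym2 {C : Finset V} (hC : G.IsClique (C : Set V)) :
    G.edgeFinset ∩ C.sym2 = C.offDiag.image Sym2.mk.uncurry := by
  ext e
  induction e using Sym2.inductionOn with
  | hf x y =>
    simp only [mem_inter, SimpleGraph.mem_edgeFinset, mem_image, mem_offDiag,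
      mk_mem_sym2_iff, SimpleGraph.mem_edgeSet, Prod.exists, Function.uncurry_apply_pair,
      Sym2.eq_iff]
    constructor
    · rintro ⟨hxy, hx, hy⟩
      exact ⟨x, y, ⟨hx, hy, hxy.ne⟩, .inl ⟨rfl, rfl⟩⟩
    · rintro ⟨a, b, ⟨ha, hb, hab⟩, ⟨rfl, rfl⟩ | ⟨rfl, rfl⟩⟩
      · exact ⟨hC ha hb hab, ha, hb⟩
      · exact ⟨hC hb ha hab.symm, hb, ha⟩

lemma SimpleGraph.IsClique.card_edgeFinset_inter_sym2 {C : Finset V}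
    (hC : G.IsClique (C : Set V)) : (G.edgeFinset ∩ C.sym2).card = C.card.choose 2 := by
  rw [hC.edgeFinset_inter_sym2, Sym2.card_image_offDiag]

end Biclique

lemma wcard_eq_choose_two (k : ℕ) : Wcard k = k.choose 2 :=
  (Nat.choose_two_right k).symm

lemma choose_two_add_choose_two (k : ℕ) : k.choose 2 + k.choose 2 = k * (k - 1) := by
  rw [← two_mul, Nat.choose_two_right, Nat.mul_div_cancel' (Nat.even_mul_pred_self k).two_dvd]

lemma mul_mul_sub_one_sub (k : ℕ) : k * (k * (k - 1)) - k = k ^ 3 - k ^ 2 - k := by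
  rw [Nat.mul_sub_one, Nat.mul_sub, ← sq, ← pow_succ']

theorem statement0_general {V : Type*} [Fintype V] [DecidableEq V] (k : ℕ)
    (hV : Fintype.card V = 2 * k) (G : SimpleGraph V) [DecidableRel G.Adj]
    (C : Finset V) (hC : G.IsNClique k C) :
    IsBiclique G (Wcard k) (Apart C) (Bpart G k C) ∧
      (Apart C).card = k ∧
      (Bpart G k C).card = k * (k - 1) ∧
      (Apart C).card * (Bpart G k C).card - (Apart C).card = k ^ 3 - k ^ 2 - k := by
  have hA : (Apart C).card = k := by
    rw [card_apart, hV, hC.card_eq]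
    omega
  have hB : (Bpart G k C).card = k * (k - 1) := by
    rw [card_bpart, hC.isClique.card_edgeFinset_inter_sym2, hC.card_eq, wcard_eq_choose_two,
      choose_two_add_choose_two]
  exact ⟨isBiclique_apart_bpart G k C, hA, hB, by rw [hA, hB, mul_mul_sub_one_sub]⟩

/-- Let `k ≥ 5` and let `C` be a clique of size `k` in `G` (here
`|V| = 2k` and `|W| = k(k−1)/2`).  Set `A = V \ C` and `B = W ∪ E(C)`.  Then
`(A, B)` is a biclique of `G′`, `|A| = k`, `|B| = k(k−1)`, and the edge saving
satisfies `|A|·|B| − |A| = k³ − k² − k`. -/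
theorem statement0 {V : Type*} [Fintype V] [DecidableEq V] (k : ℕ) (hk : 5 ≤ k)
    (hV : Fintype.card V = 2 * k) (G : SimpleGraph V) [DecidableRel G.Adj]
    (C : Finset V) (hC : G.IsNClique k C) :
    IsBiclique G (Wcard k) (Apart C) (Bpart G k C) ∧
      (Apart C).card = k ∧
      (Bpart G k C).card = k * (k - 1) ∧
      (Apart C).card * (Bpart G k C).card - (Apart C).card = k ^ 3 - k ^ 2 - k :=
  statement0_general k hV G C hC
end

section
/- Suppose G contains no clique of size k. Then for every biclique (A, B) of G′ with A nonempty, the edge saving satisfies |A|·|B| − |A| < k³ − k² − k. -/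
/-!
Every edge of `G` lying in `B` avoids `A`, so it joins two vertices of the complement `S` of `A`,
which has `n = 2k - |A|` vertices. Deleting one endpoint of each non-edge inside `S` leaves a
clique, so a `k`-clique-free `G` misses at least `n + 1 - k` of the `n choose 2` pairs in `S`.
Hence `|B| + (n + 1 - k) ≤ n choose 2 + k choose 2`, and the claimed bound is a polynomial
inequality in `|A|` and `k` that holds for `k ≥ 5`.
-/

open Finset

theorem Finset.mk_mem_image_offDiag {V : Type*} [DecidableEq V] {s : Finset V} {x y : V} :
    s(x, y) ∈ s.offDiag.image Sym2.mk.uncurry ↔ x ∈ s ∧ y ∈ s ∧ x ≠ y := by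
  simp only [mem_image, mem_offDiag, Prod.exists, Function.uncurry_apply_pair, Sym2.eq_iff]
  aesop

namespace SimpleGraph

variable {V : Type*} [DecidableEq V] (G : SimpleGraph V) [DecidableRel G.Adj]

def edgesIn (s : Finset V) : Finset (Sym2 V) :=
  {e ∈ s.offDiag.image Sym2.mk.uncurry | e ∈ G.edgeSet}

def nonEdgesIn (s : Finset V) : Finset (Sym2 V) :=
  {e ∈ s.offDiag.image Sym2.mk.uncurry | e ∉ G.edgeSet}

variable {G}

theorem mk_mem_edgesIn {s : Finset V} {x y : V} (hx : x ∈ s) (hy : y ∈ s) (h : G.Adj x y) :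
    s(x, y) ∈ G.edgesIn s :=
  mem_filter.2 ⟨mk_mem_image_offDiag.2 ⟨hx, hy, h.ne⟩, h⟩

theorem mk_mem_nonEdgesIn {s : Finset V} {x y : V} (hx : x ∈ s) (hy : y ∈ s) (hxy : x ≠ y)
    (h : ¬ G.Adj x y) : s(x, y) ∈ G.nonEdgesIn s :=
  mem_filter.2 ⟨mk_mem_image_offDiag.2 ⟨hx, hy, hxy⟩, h⟩

variable (G)

theorem card_edgesIn_add_card_nonEdgesIn (s : Finset V) :
    #(G.edgesIn s) + #(G.nonEdgesIn s) = (#s).choose 2 := by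
  rw [edgesIn, nonEdgesIn, card_filter_add_card_filter_not, Sym2.card_image_offDiag]

/-- Deleting one endpoint of every non-edge inside `s` leaves a clique. -/
theorem card_lt_card_nonEdgesIn_add {k : ℕ} (hG : G.CliqueFree k) (s : Finset V) :
    #s < #(G.nonEdgesIn s) + k := by
  by_contra! hs
  set D := (G.nonEdgesIn s).image (fun e => e.out.1)
  set T := s \ D
  have hT : G.IsClique (T : Set V) := by
    intro x hx y hy hxy
    by_contra hadj
    have hxs := (mem_sdiff.1 hx).1
    have hys := (mem_sdiff.1 hy).1
    have hout : (s(x, y)).out.1 ∈ D :=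
      mem_image_of_mem _ (mk_mem_nonEdgesIn hxs hys hxy hadj)
    rcases Sym2.mem_iff.1 (Sym2.out_fst_mem s(x, y)) with h | h <;> rw [h] at hout
    exacts [(mem_sdiff.1 hx).2 hout, (mem_sdiff.1 hy).2 hout]
  have hkT : k ≤ #T := by
    have hsD : #s - #D ≤ #T := le_card_sdiff D s
    have hD : #D ≤ #(G.nonEdgesIn s) := card_image_le
    omega
  obtain ⟨C, hCT, hC⟩ := exists_subset_card_eq hkT
  exact hG C ⟨hT.subset hCT, hC⟩

theorem card_edgesIn_add_le {k : ℕ} (hG : G.CliqueFree k) (s : Finset V) :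
    #(G.edgesIn s) + (#s + 1 - k) ≤ (#s).choose 2 := by
  have := G.card_edgesIn_add_card_nonEdgesIn s
  have := G.card_lt_card_nonEdgesIn_add hG s
  omega

end SimpleGraph

theorem IsBiclique.card_le_card_edgesIn_compl_add {V : Type*} [Fintype V] [DecidableEq V]
    {G : SimpleGraph V} [DecidableRel G.Adj] {w : ℕ} {A : Finset V}
    {B : Finset (Sym2 V ⊕ Fin w)}
    (h : IsBiclique G w A B) : #B ≤ #(G.edgesIn Aᶜ) + w := by
  calc #B ≤ #((G.edgesIn Aᶜ).disjSum univ) := card_le_card ?_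
    _ = #(G.edgesIn Aᶜ) + w := by rw [card_disjSum, card_univ, Fintype.card_fin]
  rintro (e | i) hb
  · rw [inl_mem_disjSum]
    induction e using Sym2.ind with
    | _ x y =>
      have hA : ∀ v ∈ s(x, y), v ∈ Aᶜ := fun v hv =>
        mem_compl.2 fun hvA => h.2 v hvA _ hb hv
      exact SimpleGraph.mk_mem_edgesIn (hA x (Sym2.mem_mk_left x y))
        (hA y (Sym2.mem_mk_right x y)) (h.1 _ hb)
  · simp

theorem mul_sub_lt_of_add_le_choose_two {a b n k : ℕ} (hk : 5 ≤ k) (ha : 0 < a)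
    (hn : a + n = 2 * k) (hb : b + (n + 1 - k) ≤ n.choose 2 + k.choose 2) :
    a * b - a < k ^ 3 - k ^ 2 - k := by
  have hb' : (b : ℚ) + (n + 1 - k : ℕ) ≤ n * (n - 1) / 2 + k * (k - 1) / 2 := by
    rw [← Nat.cast_choose_two, ← Nat.cast_choose_two]
    exact_mod_cast hb
  have hn' : (a : ℚ) + n = 2 * k := by exact_mod_cast hn
  have hk' : (5 : ℚ) ≤ k := by exact_mod_cast hk
  have hkey : (a * b + k + k ^ 2 : ℚ) < k ^ 3 + a := by
    rcases le_total (n + 1) k with h | h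
    · rw [Nat.sub_eq_zero_of_le h, Nat.cast_zero, add_zero] at hb'
      have h' : (n : ℚ) + 1 ≤ k := by exact_mod_cast h
      have h0 : (0 : ℚ) ≤ n := n.cast_nonneg
      rw [show (a : ℚ) = 2 * k - n by linarith]
      nlinarith [mul_le_mul_of_nonneg_left hb' (by linarith : (0 : ℚ) ≤ 2 * k - n),
        mul_nonneg (mul_nonneg h0 (sub_nonneg.2 h')) (by linarith : (0 : ℚ) ≤ k)]
    · push_cast [h] at hb'
      have h' : (k : ℚ) ≤ n + 1 := by exact_mod_cast h
      have ha' : (1 : ℚ) ≤ a := by exact_mod_cast ha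
      rw [show (n : ℚ) = 2 * k - a by linarith] at hb' h'
      -- with `t = k - a ≥ -1`, twice the slack left by the bound on `b`
      -- is `t²(t + 1) + (k - 4)t(t + 1) + 2k`
      nlinarith [mul_le_mul_of_nonneg_left hb' (by linarith : (0 : ℚ) ≤ a),
        mul_nonneg (sq_nonneg ((k : ℚ) - a)) (sub_nonneg.2 h'),
        mul_nonneg (by linarith : (0 : ℚ) ≤ k - 4) (sq_nonneg ((k : ℚ) - a + 1 / 2))]
  have hab : a * b + k + k ^ 2 < k ^ 3 + a := by exact_mod_cast hkey
  have hk3 : k ^ 2 + k < k ^ 3 := by nlinarith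
  omega

theorem statement2_general {V : Type*} [Fintype V] (k : ℕ) (hk : 5 ≤ k)
    (hV : Fintype.card V = 2 * k) (G : SimpleGraph V)
    (hnoclique : ¬ ∃ C : Finset V, G.IsNClique k C) :
    ∀ (A : Finset V) (B : Finset (Sym2 V ⊕ Fin (Wcard k))), A.Nonempty →
      IsBiclique G (Wcard k) A B →
      A.card * B.card - A.card < k ^ 3 - k ^ 2 - k := by
  classical
  intro A B hA hAB
  have hG : G.CliqueFree k := fun C hC => hnoclique ⟨C, hC⟩
  have hAc : #A + #Aᶜ = 2 * k := by rw [card_compl, hV]; have := card_le_univ A; omega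
  apply mul_sub_lt_of_add_le_choose_two hk hA.card_pos hAc
  have hB := hAB.card_le_card_edgesIn_compl_add
  have hE := G.card_edgesIn_add_le hG Aᶜ
  have hW : Wcard k = k.choose 2 := (Nat.choose_two_right k).symm
  omega

/-- Suppose `G` (with `|V| = 2k`, `k ≥ 5`) contains no clique of
size `k`.  Then for every biclique `(A, B)` of `G′` with `A` nonempty, the edge
saving satisfies `|A|·|B| − |A| < k³ − k² − k`. -/
theorem statement2 {V : Type*} [Fintype V] [DecidableEq V] (k : ℕ) (hk : 5 ≤ k)
    (hV : Fintype.card V = 2 * k) (G : SimpleGraph V)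
    (hnoclique : ¬ ∃ C : Finset V, G.IsNClique k C) :
    ∀ (A : Finset V) (B : Finset (Sym2 V ⊕ Fin (Wcard k))), A.Nonempty →
      IsBiclique G (Wcard k) A B →
      A.card * B.card - A.card < k ^ 3 - k ^ 2 - k :=
  statement2_general k hk hV G hnoclique
end

section
/- For all real numbers k and c with k ≥ 5 and 0 ≤ c ≤ k, one has (k − c)·(k(k−1)/2 + (k−2)(k+c)²/(2(k−1))) − (k − c) ≤ k³ − k² − k − (1/(2(k−1)))·((c² + 1)k² − 2c²k + c(c² − 1)(k − 2)), and this quantity is strictly less than k³ − k² − k. -/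
/-!
The left-hand side equals the right-hand side of the first inequality identically (clear the
denominator `2 (k - 1)`), so everything reduces to the positivity of the correction polynomial.
It splits as `c²k(k - 2) + (k - 2)(c³ - c + 1) + (k² - k + 2)`, and `c³ - c + 1 > 0` for `c ≥ 0`
since it equals `c (c - 1)² + 2 (c - 1/2)² + 1/2`.
-/

lemma cubic_sub_add_one_pos {c : ℝ} (hc : 0 ≤ c) : 0 < c ^ 3 - c + 1 := by
  have hsplit : c ^ 3 - c + 1 = c * (c - 1) ^ 2 + 2 * (c - 1 / 2) ^ 2 + 1 / 2 := by ring
  rw [hsplit]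
  positivity

lemma correction_pos {k c : ℝ} (hk : 2 ≤ k) (hc : 0 ≤ c) :
    0 < (c ^ 2 + 1) * k ^ 2 - 2 * c ^ 2 * k + c * (c ^ 2 - 1) * (k - 2) := by
  have hsplit : (c ^ 2 + 1) * k ^ 2 - 2 * c ^ 2 * k + c * (c ^ 2 - 1) * (k - 2)
      = c ^ 2 * k * (k - 2) + (k - 2) * (c ^ 3 - c + 1) + (k ^ 2 - k + 2) := by ring
  have hk2 : 0 ≤ k - 2 := sub_nonneg.mpr hk
  have hquad : 0 < k ^ 2 - k + 2 := by nlinarith [sq_nonneg (k - 1 / 2)]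
  rw [hsplit]
  have := cubic_sub_add_one_pos hc
  positivity

lemma sum_eq_sub_correction {k c : ℝ} (hk : k ≠ 1) :
    (k - c) * (k * (k - 1) / 2 + (k - 2) * (k + c) ^ 2 / (2 * (k - 1))) - (k - c)
      = k ^ 3 - k ^ 2 - k
        - (1 / (2 * (k - 1))) * ((c ^ 2 + 1) * k ^ 2 - 2 * c ^ 2 * k
            + c * (c ^ 2 - 1) * (k - 2)) := by
  have : k - 1 ≠ 0 := sub_ne_zero.mpr hk
  field_simp
  ring

theorem statement5_general (k c : ℝ) (hk : 5 ≤ k) (hc0 : 0 ≤ c) :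
    (k - c) * (k * (k - 1) / 2 + (k - 2) * (k + c) ^ 2 / (2 * (k - 1))) - (k - c)
        ≤ k ^ 3 - k ^ 2 - k
          - (1 / (2 * (k - 1))) * ((c ^ 2 + 1) * k ^ 2 - 2 * c ^ 2 * k
              + c * (c ^ 2 - 1) * (k - 2)) ∧
      (k - c) * (k * (k - 1) / 2 + (k - 2) * (k + c) ^ 2 / (2 * (k - 1))) - (k - c)
        < k ^ 3 - k ^ 2 - k := by
  have hk1 : 1 < k := by linarith
  have hid := sum_eq_sub_correction (c := c) hk1.ne'
  refine ⟨hid.le, ?_⟩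
  rw [hid]
  exact sub_lt_self _ (mul_pos (one_div_pos.mpr (by linarith)) (correction_pos (by linarith) hc0))

/-- For all real numbers `k` and `c` with `k ≥ 5` and `0 ≤ c ≤ k`, one has
`(k − c)·(k(k−1)/2 + (k−2)(k+c)²/(2(k−1))) − (k − c)
   ≤ k³ − k² − k − (1/(2(k−1)))·((c² + 1)k² − 2c²k + c(c² − 1)(k − 2))`,
and this quantity is strictly less than `k³ − k² − k`. -/
theorem statement5 (k c : ℝ) (hk : 5 ≤ k) (hc0 : 0 ≤ c) (hck : c ≤ k) :
    (k - c) * (k * (k - 1) / 2 + (k - 2) * (k + c) ^ 2 / (2 * (k - 1))) - (k - c)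
        ≤ k ^ 3 - k ^ 2 - k
          - (1 / (2 * (k - 1))) * ((c ^ 2 + 1) * k ^ 2 - 2 * c ^ 2 * k
              + c * (c ^ 2 - 1) * (k - 2)) ∧
      (k - c) * (k * (k - 1) / 2 + (k - 2) * (k + c) ^ 2 / (2 * (k - 1))) - (k - c)
        < k ^ 3 - k ^ 2 - k :=
  statement5_general k c hk hc0
end

section
/- Let V be a finite set with |V| = n ≥ 1 and let F be a family of subsets of V, each of size at least 2, such that for any two members m, n of F either m ⊆ n, or n ⊆ m, or m ∩ n = ∅. Then |F| ≤ n − 1. -/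
/-!
Induct on the ground set. Let `A` be a minimal member of a laminar family `F` and pick
`x ≠ y` in `A`. Every other member either strictly contains `A` or misses it, so it contains
both of `x, y` or neither. Hence erasing `x` is injective on `F \ {A}`, keeps the family
laminar and keeps every member of size at least two, while the ground set loses one point:
`|F| - 1 ≤ (|U| - 1) - 1`.
-/

namespace Finset

variable {α : Type*} [DecidableEq α]

def IsLaminar (F : Finset (Finset α)) : Prop :=
  ∀ m ∈ F, ∀ p ∈ F, m ⊆ p ∨ p ⊆ m ∨ m ∩ p = ∅

theorem eq_of_erase_eq_of_mem_iff {s t : Finset α} {a : α} (h : s.erase a = t.erase a)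
    (ha : a ∈ s ↔ a ∈ t) : s = t := by
  ext b
  rcases eq_or_ne b a with rfl | hb
  · exact ha
  · simpa [hb] using congrArg (b ∈ ·) h

namespace IsLaminar

variable {F G : Finset (Finset α)}

theorem mono (hF : IsLaminar F) (hG : G ⊆ F) : IsLaminar G :=
  fun m hm p hp => hF m (hG hm) p (hG hp)

theorem image_erase (hF : IsLaminar F) (a : α) : IsLaminar (F.image (·.erase a)) := by
  simp only [IsLaminar, mem_image]
  rintro _ ⟨m, hm, rfl⟩ _ ⟨p, hp, rfl⟩
  rcases hF m hm p hp with h | h | h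
  · exact Or.inl (erase_subset_erase a h)
  · exact Or.inr (Or.inl (erase_subset_erase a h))
  · exact Or.inr (Or.inr (subset_empty.mp (h ▸ inter_subset_inter (erase_subset a m)
      (erase_subset a p))))

theorem ssubset_or_disjoint_of_minimal (hF : IsLaminar F) {A S : Finset α}
    (hA : Minimal (· ∈ F) A) (hS : S ∈ F) (hSA : S ≠ A) : A ⊂ S ∨ Disjoint S A := by
  rcases hF S hS A hA.prop with h | h | h
  · exact absurd (h.lt_of_ne hSA) (hA.not_lt hS)
  · exact Or.inl (h.ssubset_of_ne hSA.symm)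
  · exact Or.inr (disjoint_iff_inter_eq_empty.mpr h)

theorem mem_iff_mem_of_minimal (hF : IsLaminar F) {A S : Finset α}
    (hA : Minimal (· ∈ F) A) (hS : S ∈ F) (hSA : S ≠ A) {a b : α} (ha : a ∈ A) (hb : b ∈ A) :
    a ∈ S ↔ b ∈ S := by
  rcases hF.ssubset_or_disjoint_of_minimal hA hS hSA with h | h
  · exact iff_of_true (h.subset ha) (h.subset hb)
  · exact iff_of_false (disjoint_right.mp h ha) (disjoint_right.mp h hb)

theorem two_le_card_erase_of_minimal (hF : IsLaminar F) (hsize : ∀ m ∈ F, 2 ≤ m.card)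
    {A S : Finset α} (hA : Minimal (· ∈ F) A) (hS : S ∈ F) (hSA : S ≠ A) {a : α} (ha : a ∈ A) :
    2 ≤ (S.erase a).card := by
  rcases hF.ssubset_or_disjoint_of_minimal hA hS hSA with h | h
  · have := card_lt_card h
    have := hsize A hA.prop
    rw [card_erase_of_mem (h.subset ha)]
    omega
  · rw [erase_eq_of_notMem (disjoint_right.mp h ha)]
    exact hsize S hS

theorem card_le_card_sub_one (hF : IsLaminar F) {U : Finset α} (hU : ∀ m ∈ F, m ⊆ U)
    (hsize : ∀ m ∈ F, 2 ≤ m.card) : F.card ≤ U.card - 1 := by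
  induction U using Finset.strongInduction generalizing F with
  | _ U ih =>
  obtain rfl | hne := F.eq_empty_or_nonempty
  · simp
  obtain ⟨A, hA⟩ := exists_minimal hne
  obtain ⟨x, hx, y, hy, hxy⟩ := one_lt_card.mp (hsize A hA.prop)
  set G := (F.erase A).image (·.erase x)
  have hinj : Set.InjOn (·.erase x) (F.erase A : Set (Finset α)) := by
    intro S hS T hT hST
    obtain ⟨hSA, hS⟩ := mem_erase.mp hS
    obtain ⟨hTA, hT⟩ := mem_erase.mp hT
    refine eq_of_erase_eq_of_mem_iff hST ?_
    have hyST : y ∈ S.erase x ↔ y ∈ T.erase x := by simp only at hST; rw [hST]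
    simp only [mem_erase, ne_eq, Ne.symm hxy, not_false_eq_true, true_and] at hyST
    rw [hF.mem_iff_mem_of_minimal hA hS hSA hx hy, hF.mem_iff_mem_of_minimal hA hT hTA hx hy]
    exact hyST
  have hG : G.card ≤ (U.erase x).card - 1 := by
    refine ih _ (erase_ssubset (hU A hA.prop hx)) ((hF.mono (erase_subset A F)).image_erase x)
      ?_ ?_ <;> simp only [G, mem_image, mem_erase] <;> rintro _ ⟨S, ⟨hSA, hS⟩, rfl⟩
    · exact erase_subset_erase x (hU S hS)
    · exact hF.two_le_card_erase_of_minimal hsize hA hS hSA hx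
  have hFG : F.card = G.card + 1 := by
    rw [card_image_of_injOn hinj, card_erase_add_one hA.prop]
  have hUx : (U.erase x).card = U.card - 1 := card_erase_of_mem (hU A hA.prop hx)
  have hUy : 1 ≤ (U.erase x).card := card_pos.mpr ⟨y, mem_erase.mpr ⟨hxy.symm, hU A hA.prop hy⟩⟩
  omega

end IsLaminar

end Finset

theorem statement7_general {V : Type*} [Fintype V] [DecidableEq V] (n : ℕ)
    (hcard : Fintype.card V = n) (F : Finset (Finset V))
    (hsize : ∀ m ∈ F, 2 ≤ m.card)
    (hlaminar : ∀ m ∈ F, ∀ p ∈ F, m ⊆ p ∨ p ⊆ m ∨ m ∩ p = ∅) :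
    F.card ≤ n - 1 := by
  have := Finset.IsLaminar.card_le_card_sub_one hlaminar (fun m _ => Finset.subset_univ m) hsize
  rwa [Finset.card_univ, hcard] at this

/-- Let `V` be a finite set with `|V| = n ≥ 1` and let `F` be a family of
subsets of `V`, each of size at least 2, such that for any two members `m, p` of `F`
either `m ⊆ p`, or `p ⊆ m`, or `m ∩ p = ∅` (a laminar family). Then `|F| ≤ n − 1`. -/
theorem statement7 {V : Type*} [Fintype V] [DecidableEq V] (n : ℕ) (hn : 1 ≤ n)
    (hcard : Fintype.card V = n) (F : Finset (Finset V))
    (hsize : ∀ m ∈ F, 2 ≤ m.card)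
    (hlaminar : ∀ m ∈ F, ∀ p ∈ F, m ⊆ p ∨ p ⊆ m ∨ m ∩ p = ∅) :
    F.card ≤ n - 1 :=
  statement7_general n hcard F hsize hlaminar
end

section
/- For every configuration M over (V, E), the union of the sets m × n over all representative edges (m, n) ∈ R(M) equals E; that is, the representative edges losslessly encode the original edge set. -/
/-- A configuration over `(V, E)`: a family of nonempty subsets of `V` that
contains every singleton and is laminar (any two members are nested or
disjoint). -/
def IsConfig {V : Type*} [Fintype V] [DecidableEq V] (M : Finset (Finset V)) : Prop :=
  (∀ m ∈ M, m.Nonempty) ∧ (∀ v : V, {v} ∈ M) ∧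
    ∀ m ∈ M, ∀ n ∈ M, m ⊆ n ∨ n ⊆ m ∨ m ∩ n = ∅

/-- `p = (m, n)` is a possible edge of the configuration `M`:
`m, n ∈ M`, `m × n ⊆ E`, and `m = n` or `m ∩ n = ∅`. -/
def PossEdge {V : Type*} [DecidableEq V] (E : Set (V × V)) (M : Finset (Finset V))
    (p : Finset V × Finset V) : Prop :=
  p.1 ∈ M ∧ p.2 ∈ M ∧ (∀ u ∈ p.1, ∀ v ∈ p.2, (u, v) ∈ E) ∧ (p.1 = p.2 ∨ p.1 ∩ p.2 = ∅)

/-- The possible edge `p` is dominated by some other possible edge `q`,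
i.e. `q ≠ p`, `p.1 ⊆ q.1` and `p.2 ⊆ q.2`. -/
def Dominated {V : Type*} [DecidableEq V] (E : Set (V × V)) (M : Finset (Finset V))
    (p : Finset V × Finset V) : Prop :=
  ∃ q : Finset V × Finset V, PossEdge E M q ∧ q ≠ p ∧ p.1 ⊆ q.1 ∧ p.2 ⊆ q.2

/-- The set `R(M)` of representative edges of the configuration `M`: the
possible edges not dominated by any other possible edge. -/
def RepEdges {V : Type*} [DecidableEq V] (E : Set (V × V)) (M : Finset (Finset V)) :
    Set (Finset V × Finset V) :=
  {p | PossEdge E M p ∧ ¬ Dominated E M p}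

/-- A configuration `C` is optimal if it minimises the number of representative
edges among all configurations, and no proper subfamily of `C` that is itself a
configuration has the same number of representative edges. -/
def IsOptimal {V : Type*} [Fintype V] [DecidableEq V] (E : Set (V × V))
    (C : Finset (Finset V)) : Prop :=
  IsConfig C ∧ (∀ C' : Finset (Finset V), IsConfig C' → (RepEdges E C).ncard ≤ (RepEdges E C').ncard) ∧
    ∀ D ⊆ C, D ≠ C → IsConfig D → (RepEdges E D).ncard ≠ (RepEdges E C).ncard

/-!
Every edge `(u, v)` yields the possible edge `({u}, {v})`. There are only finitely many possible
edges, so it lies below a maximal one, and the maximal possible edges are representative.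
-/

section RepresentativeEdges

variable {V : Type*} [DecidableEq V] {E : Set (V × V)} {M : Finset (Finset V)}

theorem PossEdge.mem_of_mem {p : Finset V × Finset V} (hp : PossEdge E M p) {u v : V}
    (hu : u ∈ p.1) (hv : v ∈ p.2) : (u, v) ∈ E :=
  hp.2.2.1 u hu v hv

theorem possEdge_singleton {u v : V} (hu : {u} ∈ M) (hv : {v} ∈ M) (huv : (u, v) ∈ E) :
    PossEdge E M ({u}, {v}) := by
  refine ⟨hu, hv, ?_, ?_⟩
  · simpa using huv
  · by_cases h : u = v
    · exact Or.inl (congrArg singleton h)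
    · exact Or.inr (Finset.singleton_inter_of_notMem (Finset.notMem_singleton.mpr h))

theorem setOf_possEdge_finite (E : Set (V × V)) (M : Finset (Finset V)) :
    {p | PossEdge E M p}.Finite :=
  (M ×ˢ M).finite_toSet.subset fun _ hp => Finset.mem_product.mpr ⟨hp.1, hp.2.1⟩

/-- The order on `Finset V × Finset V` is componentwise inclusion, i.e. domination. -/
theorem mem_repEdges_of_maximal {p : Finset V × Finset V} (hp : Maximal (PossEdge E M) p) :
    p ∈ RepEdges E M := by
  refine ⟨hp.prop, ?_⟩
  rintro ⟨q, hq, hqp, hpq⟩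
  exact hqp (le_antisymm (hp.2 hq hpq) hpq)

theorem PossEdge.exists_repEdges_le {p : Finset V × Finset V} (hp : PossEdge E M p) :
    ∃ q ∈ RepEdges E M, p ≤ q := by
  obtain ⟨q, hpq, hq⟩ := (setOf_possEdge_finite E M).exists_le_maximal hp
  exact ⟨q, mem_repEdges_of_maximal hq, hpq⟩

end RepresentativeEdges

/-- For every configuration `M` over `(V, E)`, the union of the
sets `m × n` over all representative edges `(m, n) ∈ R(M)` equals `E`; the
representative edges losslessly encode the original edge set. -/
theorem statement8 {V : Type*} [Fintype V] [DecidableEq V] (E : Set (V × V))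
    (M : Finset (Finset V)) (hM : IsConfig M) :
    (⋃ p ∈ RepEdges E M, ((p.1 : Set V) ×ˢ (p.2 : Set V))) = E := by
  ext ⟨u, v⟩
  simp only [Set.mem_iUnion, Set.mem_prod, Finset.mem_coe, exists_prop]
  constructor
  · rintro ⟨p, hp, hu, hv⟩
    exact hp.1.mem_of_mem hu hv
  · intro huv
    obtain ⟨q, hq, hle⟩ := (possEdge_singleton (hM.2.1 u) (hM.2.1 v) huv).exists_repEdges_le
    exact ⟨q, hq, hle.1 (Finset.mem_singleton_self u), hle.2 (Finset.mem_singleton_self v)⟩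
end

section
/- Adding a module cannot increase the number of representative edges: if M is a configuration over (V, E) and m ⊆ V is a nonempty set such that M ∪ {m} is again a configuration, then |R(M ∪ {m})| ≤ |R(M)|. -/
section

variable {V : Type*} [DecidableEq V] {E : Set (V × V)} {M : Finset (Finset V)}
  {m : Finset V} {p : Finset V × Finset V}

theorem Set.ncard_le_ncard_of_forall_exists_rel {α β : Type*} {s : Set α} {t : Set β}
    (R : α → β → Prop) (hR : ∀ a ∈ s, ∃ b ∈ t, R a b)
    (huniq : ∀ a₁ ∈ s, ∀ a₂ ∈ s, ∀ b, R a₁ b → R a₂ b → a₁ = a₂)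
    (ht : t.Finite := by toFinite_tac) : s.ncard ≤ t.ncard := by
  rcases s.eq_empty_or_nonempty with rfl | ⟨a, ha⟩
  · simp
  have : Nonempty β := ⟨(hR a ha).choose⟩
  choose! f hft hf using hR
  exact Set.ncard_le_ncard_of_injOn f hft
    (fun a₁ h₁ a₂ h₂ h => huniq a₁ h₁ a₂ h₂ _ (hf a₁ h₁) (h ▸ hf a₂ h₂)) ht

theorem maximal_comp_swap_iff {α β : Type*} [Preorder α] [Preorder β] {P : α × β → Prop}
    {x : α × β} : Maximal (P ∘ Prod.swap) x.swap ↔ Maximal P x := by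
  refine ⟨fun h => ⟨by simpa using h.prop, fun y hy hxy => ?_⟩,
    fun h => ⟨by simpa using h.prop, fun y hy hxy => ?_⟩⟩
  · simpa using h.2 (y := y.swap) (by simpa using hy) (by simpa using hxy)
  · rw [← Prod.swap_le_swap, Prod.swap_swap]
    exact h.2 hy (by rwa [← Prod.swap_le_swap, Prod.swap_swap])

theorem PossEdge.fst_eq_snd (hp : PossEdge E M p) (h : (p.1 ∩ p.2).Nonempty) : p.1 = p.2 :=
  hp.2.2.2.resolve_right h.ne_empty

theorem PossEdge.mono {N : Finset (Finset V)} (hp : PossEdge E M p) (hMN : M ⊆ N) :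
    PossEdge E N p :=
  ⟨hMN hp.1, hMN hp.2.1, hp.2.2⟩

theorem PossEdge.of_insert (hp : PossEdge E (insert m M) p) (h₁ : p.1 ≠ m) (h₂ : p.2 ≠ m) :
    PossEdge E M p :=
  ⟨(Finset.mem_insert.1 hp.1).resolve_left h₁, (Finset.mem_insert.1 hp.2.1).resolve_left h₂,
    hp.2.2⟩

theorem possEdge_swap_iff : PossEdge (Prod.swap ⁻¹' E) M p.swap ↔ PossEdge E M p := by
  simp only [PossEdge, Prod.fst_swap, Prod.snd_swap, Set.mem_preimage, Prod.swap_prod_mk,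
    Finset.inter_comm p.2, eq_comm (a := p.2)]
  exact ⟨fun ⟨h₁, h₂, hE, hd⟩ => ⟨h₂, h₁, fun u hu v hv => hE v hv u hu, hd⟩,
    fun ⟨h₁, h₂, hE, hd⟩ => ⟨h₂, h₁, fun u hu v hv => hE v hv u hu, hd⟩⟩

theorem mem_repEdges_iff_maximal : p ∈ RepEdges E M ↔ Maximal (PossEdge E M) p := by
  simp only [RepEdges, Dominated, Set.mem_ofPred_eq, maximal_iff, Prod.le_def, not_exists]
  refine and_congr_right fun _ => forall_congr' fun q => ?_
  constructor
  · intro h hq hle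
    by_contra hne
    exact h ⟨hq, Ne.symm hne, hle⟩
  · rintro h ⟨hq, hne, hle⟩
    exact hne (h hq hle).symm

theorem maximal_possEdge_swap_iff :
    Maximal (PossEdge (Prod.swap ⁻¹' E) M) p.swap ↔ Maximal (PossEdge E M) p := by
  have : PossEdge (Prod.swap ⁻¹' E) M = PossEdge E M ∘ Prod.swap := by
    funext q
    simpa using (possEdge_swap_iff (E := E) (M := M) (p := q.swap))
  rw [this, maximal_comp_swap_iff]

def RefinesAt (m : Finset V) (r p : Finset V × Finset V) : Prop :=
  r ≤ p ∧ (p.1 ≠ m → r.1 = p.1) ∧ (p.2 ≠ m → r.2 = p.2)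

section Config

variable [Fintype V]

theorem IsConfig.subset_or_subset (hM : IsConfig M) {a b : Finset V} (ha : a ∈ M) (hb : b ∈ M)
    {x : V} (hxa : x ∈ a) (hxb : x ∈ b) : a ⊆ b ∨ b ⊆ a := by
  rcases hM.2.2 a ha b hb with h | h | h
  · exact Or.inl h
  · exact Or.inr h
  · exact absurd (Finset.mem_inter.2 ⟨hxa, hxb⟩) (by simp [h])

theorem PossEdge.fst_eq_snd_of_subset (hM : IsConfig M) (hp : PossEdge E M p)
    (h : p.1 ⊆ p.2 ∨ p.2 ⊆ p.1) : p.1 = p.2 := by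
  rcases h with h | h
  · obtain ⟨x, hx⟩ := hM.1 _ hp.1
    exact hp.fst_eq_snd ⟨x, Finset.mem_inter.2 ⟨hx, h hx⟩⟩
  · obtain ⟨x, hx⟩ := hM.1 _ hp.2.1
    exact hp.fst_eq_snd ⟨x, Finset.mem_inter.2 ⟨h hx, hx⟩⟩

theorem exists_maximal_le_of_maximal_diag (hM : IsConfig M) (hM' : IsConfig (insert m M))
    (hmM : m ∉ M) (hmax : Maximal (PossEdge E (insert m M)) (m, m)) :
    ∃ r, Maximal (PossEdge E M) r ∧ r ≤ (m, m) := by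
  obtain ⟨v, hv⟩ := hM'.1 m (Finset.mem_insert_self m M)
  have hloop : PossEdge E M ({v}, {v}) :=
    ⟨hM.2.1 v, hM.2.1 v, by simpa using hmax.prop.2.2.1 v hv v hv, Or.inl rfl⟩
  obtain ⟨r, -, hr⟩ := Finite.exists_le_maximal (p := fun r => PossEdge E M r ∧ r ≤ (m, m))
    (a := ({v}, {v})) ⟨hloop, by simpa using hv⟩
  refine ⟨r, ⟨hr.prop.1, fun s hs hrs => hr.2 ⟨hs, ?_⟩ hrs⟩, hr.prop.2⟩
  obtain ⟨x₁, hx₁⟩ := hM.1 _ hr.prop.1.1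
  obtain ⟨x₂, hx₂⟩ := hM.1 _ hr.prop.1.2.1
  have hs₁ := hM'.subset_or_subset (Finset.mem_insert_of_mem hs.1) (Finset.mem_insert_self m M)
    (hrs.1 hx₁) (hr.prop.2.1 hx₁)
  have hs₂ := hM'.subset_or_subset (Finset.mem_insert_of_mem hs.2.1) (Finset.mem_insert_self m M)
    (hrs.2 hx₂) (hr.prop.2.2 hx₂)
  by_contra hsm
  have hms : (m, m) ≤ s := by
    rcases hs₁ with h₁ | h₁ <;> rcases hs₂ with h₂ | h₂
    · exact absurd ⟨h₁, h₂⟩ hsm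
    · have := hs.fst_eq_snd ⟨x₁, Finset.mem_inter.2 ⟨hrs.1 hx₁, h₂ (h₁ (hrs.1 hx₁))⟩⟩
      exact absurd ⟨h₁, this ▸ h₁⟩ hsm
    · have := hs.fst_eq_snd ⟨x₂, Finset.mem_inter.2 ⟨h₁ (h₂ (hrs.2 hx₂)), hrs.2 hx₂⟩⟩
      exact absurd ⟨this ▸ h₂, h₂⟩ hsm
    · exact ⟨h₁, h₂⟩
  obtain rfl := hmax.eq_of_le (hs.mono (Finset.subset_insert m M)) hms
  exact hmM hs.1

theorem exists_child_possEdge_gt (hM : IsConfig M) (hM' : IsConfig (insert m M)) (hmM : m ∉ M)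
    {b : Finset V} (hbm : b ≠ m) (hmax : Maximal (PossEdge E (insert m M)) (m, b))
    (hnone : ∀ c ⊆ m, ¬ Maximal (PossEdge E M) (c, b)) {v : V} (hv : v ∈ m) :
    ∃ c B, v ∈ c ∧ c ⊆ m ∧ b ⊂ B ∧ PossEdge E M (c, B) := by
  have hbM : b ∈ M := (Finset.mem_insert.1 hmax.prop.2.1).resolve_left hbm
  have hmb : m ∩ b = ∅ := hmax.prop.2.2.2.resolve_left (Ne.symm hbm)
  obtain ⟨c, -, hc⟩ := Finite.exists_le_maximal (p := fun c => c ∈ M ∧ v ∈ c ∧ c ⊆ m)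
    (a := {v}) ⟨hM.2.1 v, Finset.mem_singleton_self v, Finset.singleton_subset_iff.2 hv⟩
  obtain ⟨hcM, hvc, hcm⟩ := hc.prop
  have hcb : PossEdge E M (c, b) :=
    ⟨hcM, hbM, fun u hu w hw => hmax.prop.2.2.1 u (hcm hu) w hw,
      Or.inr (Finset.subset_empty.1 (hmb ▸ Finset.inter_subset_inter_right hcm))⟩
  obtain ⟨⟨A, B⟩, hlt, hAB⟩ := exists_gt_of_not_maximal hcb (hnone c hcm)
  have hcA : c ⊆ A := hlt.le.1
  have hAm : A ⊆ m := by
    refine (hM'.subset_or_subset (Finset.mem_insert_of_mem hAB.1) (Finset.mem_insert_self m M)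
      (hcA hvc) hv).resolve_right fun hmA => hmM ?_
    have := hmax.eq_of_le (hAB.mono (Finset.subset_insert m M)) ⟨hmA, hlt.le.2⟩
    exact (Prod.mk.inj this).1 ▸ hAB.1
  obtain rfl : A = c := (hc.eq_of_le ⟨hAB.1, hcA hvc, hAm⟩ hcA).symm
  exact ⟨A, B, hvc, hcm, Prod.mk_lt_mk_iff_right.1 hlt, hAB⟩

theorem exists_maximal_fst_subset (hM : IsConfig M) (hM' : IsConfig (insert m M)) (hmM : m ∉ M)
    {b : Finset V} (hbm : b ≠ m) (hmax : Maximal (PossEdge E (insert m M)) (m, b)) :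
    ∃ c ⊆ m, Maximal (PossEdge E M) (c, b) := by
  by_contra! hnone
  have hbM : b ∈ M := (Finset.mem_insert.1 hmax.prop.2.1).resolve_left hbm
  have hmb : m ∩ b = ∅ := hmax.prop.2.2.2.resolve_left (Ne.symm hbm)
  obtain ⟨v₀, hv₀⟩ := hM'.1 m (Finset.mem_insert_self m M)
  obtain ⟨c₀, B₀, hv₀c₀, hc₀m, hbB₀, hc₀B₀⟩ :=
    exists_child_possEdge_gt hM hM' hmM hbm hmax hnone hv₀
  obtain ⟨P, hPB₀, hP⟩ := Finite.exists_le_minimal (p := fun B => B ∈ M ∧ b ⊂ B)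
    (a := B₀) ⟨hc₀B₀.2.1, hbB₀⟩
  obtain ⟨x, hx⟩ := hM.1 b hbM
  have hPle : ∀ B ∈ M, b ⊂ B → P ⊆ B := fun B hB hbB =>
    (hM.subset_or_subset hP.prop.1 hB (hP.prop.2.le hx) (hbB.le hx)).elim id
      fun h => hP.le_of_le ⟨hB, hbB⟩ h
  have hmPE : ∀ u ∈ m, ∀ w ∈ P, (u, w) ∈ E := by
    intro u hu w hw
    obtain ⟨c, B, huc, -, hbB, hcB⟩ := exists_child_possEdge_gt hM hM' hmM hbm hmax hnone hu
    exact hcB.2.2.1 u huc w (hPle B hcB.2.1 hbB hw)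
  have hmP : m ∩ P = ∅ := by
    rcases hM'.2.2 m (Finset.mem_insert_self m M) P (Finset.mem_insert_of_mem hP.prop.1)
      with h | h | h
    · have hc₀ : c₀ = B₀ := hc₀B₀.fst_eq_snd ⟨v₀, Finset.mem_inter.2 ⟨hv₀c₀, hPB₀ (h hv₀)⟩⟩
      exact absurd (Finset.Subset.antisymm hc₀m (hc₀ ▸ h.trans hPB₀) ▸ hc₀B₀.1) hmM
    · exact absurd (Finset.mem_inter.2 ⟨h (hP.prop.2.le hx), hx⟩) (by simp [hmb])
    · exact h
  have := hmax.eq_of_le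
    ⟨Finset.mem_insert_self m M, Finset.mem_insert_of_mem hP.prop.1, hmPE, Or.inr hmP⟩
    (show (m, b) ≤ (m, P) from ⟨le_rfl, hP.prop.2.le⟩)
  exact hP.prop.2.ne (congrArg Prod.snd this)

theorem exists_maximal_snd_subset (hM : IsConfig M) (hM' : IsConfig (insert m M))
    (hmM : m ∉ M) {a : Finset V} (ham : a ≠ m)
    (hmax : Maximal (PossEdge E (insert m M)) (a, m)) :
    ∃ c ⊆ m, Maximal (PossEdge E M) (a, c) := by
  obtain ⟨c, hcm, hc⟩ := exists_maximal_fst_subset (E := Prod.swap ⁻¹' E) hM hM' hmM ham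
    (maximal_possEdge_swap_iff (p := (a, m)) |>.2 hmax)
  exact ⟨c, hcm, maximal_possEdge_swap_iff (p := (a, c)) |>.1 hc⟩

theorem RefinesAt.eq_of_maximal {M' : Finset (Finset V)} (hM' : IsConfig M')
    {p q r : Finset V × Finset V} (hp : Maximal (PossEdge E M') p)
    (hq : Maximal (PossEdge E M') q) (hrp : RefinesAt m r p) (hrq : RefinesAt m r q) :
    p = q := by
  have hp₁ : p.1 ≠ m → p.1 ⊆ q.1 := fun h => hrp.2.1 h ▸ hrq.1.1
  have hp₂ : p.2 ≠ m → p.2 ⊆ q.2 := fun h => hrp.2.2 h ▸ hrq.1.2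
  have hq₁ : q.1 ≠ m → q.1 ⊆ p.1 := fun h => hrq.2.1 h ▸ hrp.1.1
  have hq₂ : q.2 ≠ m → q.2 ⊆ p.2 := fun h => hrq.2.2 h ▸ hrp.1.2
  -- The only incomparable pattern left is `p = (m, x)`, `q = (y, m)` with `x ⊆ m` (or its
  -- mirror image), and a possible edge with one side inside the other is a loop.
  have hpq : p ≤ q ∨ q ≤ p := by
    have lp := hp.prop.fst_eq_snd_of_subset hM'
    have lq := hq.prop.fst_eq_snd_of_subset hM'
    simp only [Prod.le_def]
    by_cases hpm₁ : p.1 = m <;> by_cases hpm₂ : p.2 = m <;> by_cases hqm₁ : q.1 = m <;>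
      by_cases hqm₂ : q.2 = m <;> simp_all
  rcases hpq with h | h
  · exact hp.eq_of_le hq.prop h
  · exact hq.eq_of_ge hp.prop h

theorem exists_maximal_refinesAt (hM : IsConfig M) (hM' : IsConfig (insert m M))
    (hmM : m ∉ M) (hp : Maximal (PossEdge E (insert m M)) p) :
    ∃ r, Maximal (PossEdge E M) r ∧ RefinesAt m r p := by
  obtain ⟨a, b⟩ := p
  by_cases ha : a = m <;> by_cases hb : b = m
  · subst ha hb
    obtain ⟨r, hr, hrm⟩ := exists_maximal_le_of_maximal_diag hM hM' hmM hp
    exact ⟨r, hr, hrm, fun h => absurd rfl h, fun h => absurd rfl h⟩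
  · subst ha
    obtain ⟨c, hcm, hc⟩ := exists_maximal_fst_subset hM hM' hmM hb hp
    exact ⟨(c, b), hc, ⟨hcm, le_rfl⟩, fun h => absurd rfl h, fun _ => rfl⟩
  · subst hb
    obtain ⟨c, hcm, hc⟩ := exists_maximal_snd_subset hM hM' hmM ha hp
    exact ⟨(a, c), hc, ⟨le_rfl, hcm⟩, fun _ => rfl, fun h => absurd rfl h⟩
  · exact ⟨(a, b), hp.mono (fun q hq => hq.mono (Finset.subset_insert m M))
      (hp.prop.of_insert ha hb), le_rfl, fun _ => rfl, fun _ => rfl⟩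

end Config

end

theorem statement9_general {V : Type*} [Fintype V] [DecidableEq V] (E : Set (V × V))
    (M : Finset (Finset V)) (hM : IsConfig M) (m : Finset V)
    (hM' : IsConfig (insert m M)) :
    (RepEdges E (insert m M)).ncard ≤ (RepEdges E M).ncard := by
  by_cases hmM : m ∈ M
  · rw [Finset.insert_eq_of_mem hmM]
  refine Set.ncard_le_ncard_of_forall_exists_rel (fun p r => RefinesAt m r p) ?_ ?_
  · intro p hp
    obtain ⟨r, hr, hrp⟩ :=
      exists_maximal_refinesAt hM hM' hmM (mem_repEdges_iff_maximal.1 hp)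
    exact ⟨r, mem_repEdges_iff_maximal.2 hr, hrp⟩
  · intro p hp q hq r hrp hrq
    exact hrp.eq_of_maximal hM' (mem_repEdges_iff_maximal.1 hp)
      (mem_repEdges_iff_maximal.1 hq) hrq

/-- Adding a module cannot increase the number of representative
edges: if `M` is a configuration over `(V, E)` and `m ⊆ V` is a nonempty set
such that `M ∪ {m}` is again a configuration, then `|R(M ∪ {m})| ≤ |R(M)|`. -/
theorem statement9 {V : Type*} [Fintype V] [DecidableEq V] (E : Set (V × V))
    (M : Finset (Finset V)) (hM : IsConfig M) (m : Finset V) (hm : m.Nonempty)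
    (hM' : IsConfig (insert m M)) :
    (RepEdges E (insert m M)).ncard ≤ (RepEdges E M).ncard :=
  statement9_general E M hM m hM'
end

section
/- The module consisting of all vertices is never improving: suppose E contains no self-loops, i.e. (v, v) ∉ E for every v ∈ V, and |V| ≥ 2. Then for every configuration M over (V, E) with V ∉ M, one has R(M ∪ {V}) = R(M); in particular adding the module V does not reduce the number of representative edges. -/
section

variable {V : Type*} [DecidableEq V] {E : Set (V × V)} {M : Finset (Finset V)}

theorem PossEdge.disjoint (hloop : ∀ v : V, (v, v) ∉ E) {p : Finset V × Finset V}
    (hp : PossEdge E M p) (hne : p.1.Nonempty) : Disjoint p.1 p.2 := by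
  obtain ⟨-, -, hE, heq | hdisj⟩ := hp
  · obtain ⟨v, hv⟩ := hne
    exact absurd (hE v hv v (heq ▸ hv)) (hloop v)
  · exact Finset.disjoint_iff_inter_eq_empty.mpr hdisj

theorem repEdges_congr {M' : Finset (Finset V)} (h : ∀ p, PossEdge E M p ↔ PossEdge E M' p) :
    RepEdges E M = RepEdges E M' := by
  ext p
  simp only [RepEdges, Dominated, Set.mem_ofPred_eq, h]

theorem possEdge_insert_univ_iff [Fintype V] [Nonempty V] (hloop : ∀ v : V, (v, v) ∉ E)
    (hne : ∀ m ∈ M, m.Nonempty) {p : Finset V × Finset V} :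
    PossEdge E (insert Finset.univ M) p ↔ PossEdge E M p := by
  refine ⟨fun hp => ?_, fun ⟨h1, h2, hE, hd⟩ =>
    ⟨Finset.mem_insert_of_mem h1, Finset.mem_insert_of_mem h2, hE, hd⟩⟩
  have hne' : ∀ m ∈ insert Finset.univ M, m.Nonempty :=
    Finset.forall_mem_insert _ _ _ |>.mpr ⟨Finset.univ_nonempty, hne⟩
  have hdisj : Disjoint p.1 p.2 := hp.disjoint hloop (hne' _ hp.1)
  obtain ⟨h1, h2, hE, hd⟩ := hp
  have h1M : p.1 ∈ M := (Finset.mem_insert.mp h1).resolve_left fun hu => by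
    obtain ⟨v, hv⟩ := hne' _ h2
    exact Finset.disjoint_left.mp hdisj (hu ▸ Finset.mem_univ v) hv
  have h2M : p.2 ∈ M := (Finset.mem_insert.mp h2).resolve_left fun hu => by
    obtain ⟨v, hv⟩ := hne' _ h1
    exact Finset.disjoint_right.mp hdisj (hu ▸ Finset.mem_univ v) hv
  exact ⟨h1M, h2M, hE, hd⟩

end

theorem statement13_general {V : Type*} [Fintype V] [DecidableEq V] (E : Set (V × V))
    (hloop : ∀ v : V, (v, v) ∉ E) (hV : 2 ≤ Fintype.card V)
    (M : Finset (Finset V)) (hM : IsConfig M) :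
    RepEdges E (insert Finset.univ M) = RepEdges E M := by
  have : Nonempty V := Fintype.card_pos_iff.mp (by omega)
  exact repEdges_congr fun _ => possEdge_insert_univ_iff hloop hM.1

/-- The module consisting of all vertices is never improving:
suppose `E` contains no self-loops and `|V| ≥ 2`.  Then for every configuration
`M` over `(V, E)` with `V ∉ M`, one has `R(M ∪ {V}) = R(M)`; in particular
adding the module `V` does not reduce the number of representative edges. -/
theorem statement13 {V : Type*} [Fintype V] [DecidableEq V] (E : Set (V × V))
    (hloop : ∀ v : V, (v, v) ∉ E) (hV : 2 ≤ Fintype.card V)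
    (M : Finset (Finset V)) (hM : IsConfig M)
    (huniv : (Finset.univ : Finset V) ∉ M) :
    RepEdges E (insert Finset.univ M) = RepEdges E M :=
  statement13_general E hloop hV M hM
end
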